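/- arXiv:2406.15967 — 5 statements merged into one kernel-verified Lean document; each statement's English description precedes it below -/
import Mathlib

section
/- If (a,b,c) is a positive integer solution of a² + b² + c² = 3abc with a ≥ b ≥ c and a > 1, then 3bc - a < a, i.e., mutation at the largest entry strictly decreases it. -/
/-!
Mutating the Markov triple at `a` replaces `a` by the other root `a' = 3bc - a` of
`x² - 3bc·x + b² + c²`, so `(b - a)(b - a') = 2b² + c² - 3b²c`.
For `1 ≤ c ≤ b` with `b > 1` the right side is negative, hence `a' < b ≤ a`;
if `b = 1` then `c = 1` and `a' = 3 - a < a` because `a ≥ 2`.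
-/

theorem markov_sub_mul_sub_mutation {R : Type*} [CommRing R] {a b c : R}
    (h : a ^ 2 + b ^ 2 + c ^ 2 = 3 * a * b * c) :
    (b - a) * (b - (3 * b * c - a)) = 2 * b ^ 2 + c ^ 2 - 3 * b ^ 2 * c := by
  linear_combination -h

theorem two_mul_sq_add_sq_lt {R : Type*} [CommRing R] [LinearOrder R] [IsStrictOrderedRing R]
    {b c : R} (hc : 1 ≤ c) (hcb : c ≤ b) (hb : 1 < b) :
    2 * b ^ 2 + c ^ 2 < 3 * b ^ 2 * c := by
  have hcb2 : c < b ^ 2 := by nlinarith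
  nlinarith

theorem markov_mutation_lt_of_one_lt {R : Type*} [CommRing R] [LinearOrder R]
    [IsStrictOrderedRing R] {a b c : R} (hc : 1 ≤ c) (hcb : c ≤ b) (hb : 1 < b) (hba : b ≤ a)
    (h : a ^ 2 + b ^ 2 + c ^ 2 = 3 * a * b * c) :
    3 * b * c - a < b := by
  have hneg : (b - a) * (b - (3 * b * c - a)) < 0 := by
    rw [markov_sub_mul_sub_mutation h]
    linarith [two_mul_sq_add_sq_lt hc hcb hb]
  by_contra! hle
  exact hneg.not_ge (mul_nonneg_of_nonpos_of_nonpos (by linarith) (by linarith))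

theorem markov_mutation_decreases_general (a b c : ℤ) (hc : 0 < c)
    (hab : b ≤ a) (hbc : c ≤ b) (ha1 : 1 < a)
    (h : a ^ 2 + b ^ 2 + c ^ 2 = 3 * a * b * c) :
    3 * b * c - a < a := by
  rcases (show b = 1 ∨ 1 < b by omega) with rfl | hb
  · obtain rfl : c = 1 := by omega
    omega
  · linarith [markov_mutation_lt_of_one_lt (by omega) hbc hb hab h]

/-- If `(a,b,c)` is a positive integer solution of the Markov equation with
`a ≥ b ≥ c` and `a > 1`, then mutation at the largest entry strictly decreases it:
`3bc - a < a`. -/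
theorem markov_mutation_decreases (a b c : ℤ) (ha : 0 < a) (hb : 0 < b) (hc : 0 < c)
    (hab : b ≤ a) (hbc : c ≤ b) (ha1 : 1 < a)
    (h : a ^ 2 + b ^ 2 + c ^ 2 = 3 * a * b * c) :
    3 * b * c - a < a :=
  markov_mutation_decreases_general a b c hc hab hbc ha1 h
end

section
/- Every positive integer solution (a,b,c) of the Markov equation a² + b² + c² = 3abc can be transformed into (1,1,1) by a finite sequence of mutations (replacing one coordinate x among {a,b,c} by 3yz - x, where y,z are the other two) and permutations of coordinates. -/
/-- One step on Markov triples: either a mutation of one coordinate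
(replacing `x` by three times the product of the other two minus `x`),
or a permutation of the coordinates. -/
def MarkovStep (p q : ℤ × ℤ × ℤ) : Prop :=
  (q = (3 * p.2.1 * p.2.2 - p.1, p.2.1, p.2.2) ∨
   q = (p.1, 3 * p.1 * p.2.2 - p.2.1, p.2.2) ∨
   q = (p.1, p.2.1, 3 * p.1 * p.2.1 - p.2.2)) ∨
  (q = (p.1, p.2.1, p.2.2) ∨ q = (p.1, p.2.2, p.2.1) ∨ q = (p.2.1, p.1, p.2.2) ∨
   q = (p.2.1, p.2.2, p.1) ∨ q = (p.2.2, p.1, p.2.1) ∨ q = (p.2.2, p.2.1, p.1))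

/-- A permutation step sorting any Markov triple into decreasing order. -/
lemma markov_sort3 (a b c : ℤ) (ha : 0 < a) (hb : 0 < b) (hc : 0 < c)
    (h : a ^ 2 + b ^ 2 + c ^ 2 = 3 * a * b * c) :
    ∃ x y z : ℤ, MarkovStep (a, b, c) (x, y, z) ∧ 0 < x ∧ 0 < y ∧ 0 < z ∧
      y ≤ x ∧ z ≤ y ∧ x + y + z = a + b + c ∧
      x ^ 2 + y ^ 2 + z ^ 2 = 3 * x * y * z := by
  rcases le_total a b with h1 | h1 <;> rcases le_total b c with h2 | h2 <;>
    rcases le_total a c with h3 | h3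
  · exact ⟨c, b, a, Or.inr (Or.inr (Or.inr (Or.inr (Or.inr (Or.inr rfl))))),
      hc, hb, ha, h2, h1, by ring, by linear_combination h⟩
  · exact ⟨c, b, a, Or.inr (Or.inr (Or.inr (Or.inr (Or.inr (Or.inr rfl))))),
      hc, hb, ha, h2, h1, by ring, by linear_combination h⟩
  · exact ⟨b, c, a, Or.inr (Or.inr (Or.inr (Or.inr (Or.inl rfl)))),
      hb, hc, ha, h2, h3, by ring, by linear_combination h⟩
  · exact ⟨b, a, c, Or.inr (Or.inr (Or.inr (Or.inl rfl))),
      hb, ha, hc, h1, h3, by ring, by linear_combination h⟩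
  · exact ⟨c, a, b, Or.inr (Or.inr (Or.inr (Or.inr (Or.inr (Or.inl rfl))))),
      hc, ha, hb, h3, h1, by ring, by linear_combination h⟩
  · exact ⟨a, c, b, Or.inr (Or.inr (Or.inl rfl)),
      ha, hc, hb, h3, h2, by ring, by linear_combination h⟩
  · exact ⟨a, b, c, Or.inr (Or.inl rfl),
      ha, hb, hc, h1, h2, by ring, by linear_combination h⟩
  · exact ⟨a, b, c, Or.inr (Or.inl rfl),
      ha, hb, hc, h1, h2, by ring, by linear_combination h⟩

lemma markov_aux : ∀ n : ℕ, ∀ a b c : ℤ, 0 < a → 0 < b → 0 < c →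
    a + b + c ≤ (n : ℤ) → a ^ 2 + b ^ 2 + c ^ 2 = 3 * a * b * c →
    Relation.ReflTransGen MarkovStep (a, b, c) (1, 1, 1) := by
  intro n
  induction n with
  | zero => intro a b c ha hb hc hn _; exfalso; push_cast at hn; linarith
  | succ n ih =>
    intro a b c ha hb hc hn h
    obtain ⟨x, y, z, hstep, hx, hy, hz, hyx, hzy, hsum, heq⟩ :=
      markov_sort3 a b c ha hb hc h
    refine Relation.ReflTransGen.head hstep ?_
    rcases eq_or_lt_of_le (show (1:ℤ) ≤ y by omega) with hy1 | hy2
    · -- y = 1, hence z = 1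
      have hz1 : z = 1 := by omega
      have hy1' : y = 1 := by omega
      subst hz1; subst hy1'
      have hx12 : (x - 1) * (x - 2) = 0 := by linear_combination heq
      rcases mul_eq_zero.mp hx12 with h' | h'
      · have : x = 1 := by linarith
        subst this; exact Relation.ReflTransGen.refl
      · have : x = 2 := by linarith
        subst this
        exact Relation.ReflTransGen.single (Or.inl (Or.inl (by norm_num)))
    · -- y ≥ 2
      have hy2' : 2 ≤ y := hy2
      have hxy : y < x := by
        by_contra hxy
        push_neg at hxy
        have hxe : x = y := le_antisymm hxy hyx
        subst hxe
        nlinarith [sq_nonneg (x - z), sq_nonneg z, mul_pos hx hx]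
      set w : ℤ := 3 * y * z - x with hw
      have h5 : w * x = y ^ 2 + z ^ 2 := by rw [hw]; linear_combination -heq
      have hwpos : 0 < w := by
        by_contra hw0
        push_neg at hw0
        have : w * x ≤ 0 := mul_nonpos_iff.mpr (Or.inr ⟨hw0, hx.le⟩)
        nlinarith [sq_nonneg y, sq_nonneg z]
      have h3 : (y - x) * (y - w) = 2 * y ^ 2 + z ^ 2 - 3 * y ^ 2 * z := by
        rw [hw]; linear_combination -heq
      have h4 : 2 * y ^ 2 + z ^ 2 - 3 * y ^ 2 * z < 0 := by
        nlinarith [mul_pos hy hz, mul_pos hy hy, sq_nonneg (y - z)]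
      have hwy : w < y := by
        by_contra hwy
        push_neg at hwy
        have h6 : 0 ≤ (x - y) * (w - y) :=
          mul_nonneg (by linarith) (by linarith)
        nlinarith [h6, h3, h4]
      have heq' : w ^ 2 + y ^ 2 + z ^ 2 = 3 * w * y * z := by
        rw [hw]; linear_combination heq
      refine Relation.ReflTransGen.head (Or.inl (Or.inl rfl)) ?_
      exact ih w y z hwpos hy hz (by push_cast at hn ⊢; omega) heq'

/-- Every positive integer solution of the Markov equation `a² + b² + c² = 3abc`
can be transformed into `(1,1,1)` by a finite sequence of mutations and
permutations of the coordinates. -/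
theorem markov_reaches_one (a b c : ℤ) (ha : 0 < a) (hb : 0 < b) (hc : 0 < c)
    (h : a ^ 2 + b ^ 2 + c ^ 2 = 3 * a * b * c) :
    Relation.ReflTransGen MarkovStep (a, b, c) (1, 1, 1) := by
  exact markov_aux (a + b + c).toNat a b c ha hb hc
    (le_of_eq (Int.toNat_of_nonneg (by linarith)).symm) h
end

section
/- Let w₁, w₂, w₃ be positive reals satisfying √(9 w₁ w₂ w₃) = w₁ + w₂ + w₃, and suppose w₂ = n₂² and w₃ = n₃² for positive integers n₂, n₃, and w₁ is a positive integer. Then w₁ is a perfect square, say w₁ = n₁², and (n₁, n₂, n₃) satisfies the Markov equation n₁² + n₂² + n₃² = 3 n₁ n₂ n₃. -/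
/-!
Squaring the relation gives `9 m n₂² n₃² = (m + n₂² + n₃²)²` in `ℕ`. Since `9 n₂² n₃²` is the
square of `3 n₂ n₃`, the cofactor `m` of a perfect square is itself a perfect square `n₁²`, and
taking square roots gives `m + n₂² + n₃² = 3 n₁ n₂ n₃`.
-/

theorem exists_eq_sq_of_sq_mul_eq_sq {d m s : ℕ} (hd : d ≠ 0) (h : d ^ 2 * m = s ^ 2) :
    ∃ n, m = n ^ 2 ∧ s = d * n := by
  obtain ⟨n, rfl⟩ : d ∣ s := (Nat.pow_dvd_pow_iff two_ne_zero).mp ⟨m, h.symm⟩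
  refine ⟨n, Nat.eq_of_mul_eq_mul_left (by positivity : 0 < d ^ 2) ?_, rfl⟩
  rw [h, mul_pow]

theorem exists_markov_of_sq_weights {m a b : ℕ} (ha : a ≠ 0) (hb : b ≠ 0)
    (h : 9 * m * a ^ 2 * b ^ 2 = (m + a ^ 2 + b ^ 2) ^ 2) :
    ∃ n, 0 < n ∧ m = n ^ 2 ∧ n ^ 2 + a ^ 2 + b ^ 2 = 3 * n * a * b := by
  obtain ⟨n, rfl, hs⟩ := exists_eq_sq_of_sq_mul_eq_sq (d := 3 * a * b) (m := m) (by positivity)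
    (by rw [← h]; ring)
  have hn : 0 < 3 * a * b * n := hs ▸ by positivity
  exact ⟨n, Nat.pos_of_mul_pos_left hn, rfl, by rw [hs]; ring⟩

theorem weight_is_square_markov_general (w₁ w₂ w₃ : ℝ)
    (hrel : Real.sqrt (9 * w₁ * w₂ * w₃) = w₁ + w₂ + w₃)
    (n₂ n₃ : ℕ) (hn₂ : 0 < n₂) (hn₃ : 0 < n₃)
    (hw₂ : w₂ = (n₂ : ℝ) ^ 2) (hw₃ : w₃ = (n₃ : ℝ) ^ 2)
    (hint : ∃ m : ℕ, 0 < m ∧ w₁ = (m : ℝ)) :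
    ∃ n₁ : ℕ, 0 < n₁ ∧ w₁ = (n₁ : ℝ) ^ 2 ∧
      n₁ ^ 2 + n₂ ^ 2 + n₃ ^ 2 = 3 * n₁ * n₂ * n₃ := by
  obtain ⟨m, -, rfl⟩ := hint
  subst hw₂ hw₃
  have hsq : (9 * m * n₂ ^ 2 * n₃ ^ 2 : ℝ) = (m + n₂ ^ 2 + n₃ ^ 2) ^ 2 := by
    rw [← hrel, Real.sq_sqrt (by positivity)]
  obtain ⟨n₁, hn₁, rfl, hmarkov⟩ :=
    exists_markov_of_sq_weights hn₂.ne' hn₃.ne' (by exact_mod_cast hsq)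
  exact ⟨n₁, hn₁, by push_cast; rfl, hmarkov⟩

/-- If positive reals `w₁, w₂, w₃` satisfy `√(9 w₁ w₂ w₃) = w₁ + w₂ + w₃`,
with `w₂ = n₂²`, `w₃ = n₃²` for positive integers `n₂, n₃`, and `w₁` is a
positive integer, then `w₁` is a perfect square `n₁²` and `(n₁, n₂, n₃)` is a
Markov triple. -/
theorem weight_is_square_markov (w₁ w₂ w₃ : ℝ) (h₁ : 0 < w₁) (h₂ : 0 < w₂) (h₃ : 0 < w₃)
    (hrel : Real.sqrt (9 * w₁ * w₂ * w₃) = w₁ + w₂ + w₃)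
    (n₂ n₃ : ℕ) (hn₂ : 0 < n₂) (hn₃ : 0 < n₃)
    (hw₂ : w₂ = (n₂ : ℝ) ^ 2) (hw₃ : w₃ = (n₃ : ℝ) ^ 2)
    (hint : ∃ m : ℕ, 0 < m ∧ w₁ = (m : ℝ)) :
    ∃ n₁ : ℕ, 0 < n₁ ∧ w₁ = (n₁ : ℝ) ^ 2 ∧
      n₁ ^ 2 + n₂ ^ 2 + n₃ ^ 2 = 3 * n₁ * n₂ * n₃ :=
  weight_is_square_markov_general w₁ w₂ w₃ hrel n₂ n₃ hn₂ hn₃ hw₂ hw₃ hint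
end

section
/- The map Θ: S¹ × S¹ → ℂ², (ϑ, t) ↦ (1/√2)(e^{2πiϑ} γ(t), e^{-2πiϑ} γ(t)), where γ: S¹ → ℂ is a smooth embedded closed curve contained in an open half-plane not containing 0, is a Lagrangian embedding with respect to the standard symplectic form ω₀ = dx₁∧dy₁ + dx₂∧dy₂ on ℂ² ≅ ℝ⁴. -/
open Complex

/-- The standard symplectic form `ω₀ = dx₁∧dy₁ + dx₂∧dy₂` on `ℂ² ≅ ℝ⁴`,
evaluated on a pair of tangent vectors: `ω₀(u,v) = Im(conj u₁ · v₁) + Im(conj u₂ · v₂)`. -/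
def omega0 (u v : ℂ × ℂ) : ℝ :=
  ((starRingEnd ℂ) u.1 * v.1).im + ((starRingEnd ℂ) u.2 * v.2).im

/-- The Chekanov torus map `Θ(ϑ,t) = (1/√2)(e^{2πiϑ} γ(t), e^{-2πiϑ} γ(t))`,
with the torus parametrized by `ℝ²` with period `1` in each variable. -/
noncomputable def Theta (γ : ℝ → ℂ) (p : ℝ × ℝ) : ℂ × ℂ :=
  (((Real.sqrt 2)⁻¹ : ℝ) • (Complex.exp (2 * Real.pi * Complex.I * (p.1 : ℂ)) * γ p.2),
   ((Real.sqrt 2)⁻¹ : ℝ) • (Complex.exp (-(2 * Real.pi * Complex.I * (p.1 : ℂ))) * γ p.2))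

/-- candidate derivative of the component map `p ↦ exp (w * p.1) * γ p.2` -/
noncomputable def Lcomp (w : ℂ) (γ : ℝ → ℂ) (p : ℝ × ℝ) : (ℝ × ℝ) →L[ℝ] ℂ :=
  (ContinuousLinearMap.fst ℝ ℝ ℝ).smulRight (w * Complex.exp (w * p.1) * γ p.2)
  + (ContinuousLinearMap.snd ℝ ℝ ℝ).smulRight (Complex.exp (w * p.1) * deriv γ p.2)

lemma Lcomp_apply (w : ℂ) (γ : ℝ → ℂ) (p : ℝ × ℝ) (v : ℝ × ℝ) :
    Lcomp w γ p v = v.1 • (w * Complex.exp (w * p.1) * γ p.2)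
      + v.2 • (Complex.exp (w * p.1) * deriv γ p.2) := by
  simp [Lcomp]

lemma hasDerivAt_expw (w : ℂ) (x : ℝ) :
    HasDerivAt (fun ϑ : ℝ => Complex.exp (w * ϑ)) (w * Complex.exp (w * x)) x := by
  have h0 : HasDerivAt (fun ϑ : ℝ => ((ϑ : ℂ))) 1 x := by
    simpa using (hasDerivAt_id x).ofReal_comp
  simpa [mul_comm] using (h0.const_mul w).cexp

lemma hasFDerivAt_comp (w : ℂ) (γ : ℝ → ℂ) (hγ : ∀ t, HasDerivAt γ (deriv γ t) t) (p : ℝ × ℝ) :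
    HasFDerivAt (fun p : ℝ × ℝ => Complex.exp (w * p.1) * γ p.2) (Lcomp w γ p) p := by
  have h1 : HasFDerivAt (fun q : ℝ × ℝ => Complex.exp (w * q.1))
      (((1 : ℝ →L[ℝ] ℝ).smulRight (w * Complex.exp (w * p.1))).comp
        (ContinuousLinearMap.fst ℝ ℝ ℝ)) p :=
    (hasDerivAt_expw w p.1).hasFDerivAt.comp p hasFDerivAt_fst
  have h2 : HasFDerivAt (fun q : ℝ × ℝ => γ q.2)
      (((1 : ℝ →L[ℝ] ℝ).smulRight (deriv γ p.2)).comp (ContinuousLinearMap.snd ℝ ℝ ℝ)) p :=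
    (hγ p.2).hasFDerivAt.comp p hasFDerivAt_snd
  have h := h1.mul h2
  refine h.congr_fderiv ?_
  refine ContinuousLinearMap.ext fun v => ?_
  simp [Lcomp]
  ring

/-- the frequency `2πi` -/
noncomputable def om : ℂ := 2 * Real.pi * Complex.I

lemma om_ne : om ≠ 0 := by
  simp [om, Real.pi_ne_zero, Complex.I_ne_zero, Complex.ofReal_ne_zero]

lemma conj_om : (starRingEnd ℂ) om = -om := by
  rw [om, map_mul, map_mul, Complex.conj_I, Complex.conj_ofReal, map_ofNat]
  ring

/-- full candidate derivative of `Theta γ` -/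
noncomputable def ThetaDeriv (γ : ℝ → ℂ) (p : ℝ × ℝ) : (ℝ × ℝ) →L[ℝ] ℂ × ℂ :=
  (((Real.sqrt 2)⁻¹ : ℝ) • Lcomp om γ p).prod (((Real.sqrt 2)⁻¹ : ℝ) • Lcomp (-om) γ p)

lemma theta_hasFDerivAt (γ : ℝ → ℂ) (hγ : ∀ t, HasDerivAt γ (deriv γ t) t) (p : ℝ × ℝ) :
    HasFDerivAt (Theta γ) (ThetaDeriv γ p) p := by
  have h1 := ((hasFDerivAt_comp om γ hγ p).const_smul ((Real.sqrt 2)⁻¹ : ℝ))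
  have h2 := ((hasFDerivAt_comp (-om) γ hγ p).const_smul ((Real.sqrt 2)⁻¹ : ℝ))
  have hfun : Theta γ = fun q : ℝ × ℝ =>
      (((Real.sqrt 2)⁻¹ : ℝ) • (Complex.exp (om * q.1) * γ q.2),
       ((Real.sqrt 2)⁻¹ : ℝ) • (Complex.exp (-om * q.1) * γ q.2)) := by
    funext q
    simp [Theta, om, neg_mul]
  rw [hfun]
  exact (h1 : HasFDerivAt _ _ p).prodMk h2

lemma theta_fderiv (γ : ℝ → ℂ) (hγ : ∀ t, HasDerivAt γ (deriv γ t) t) (p : ℝ × ℝ) :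
    fderiv ℝ (Theta γ) p = ThetaDeriv γ p :=
  (theta_hasFDerivAt γ hγ p).fderiv

lemma LT_apply (γ : ℝ → ℂ) (p : ℝ × ℝ) (v : ℝ × ℝ) :
    ThetaDeriv γ p v =
      (((Real.sqrt 2)⁻¹ : ℝ) • (v.1 • (om * Complex.exp (om * p.1) * γ p.2)
          + v.2 • (Complex.exp (om * p.1) * deriv γ p.2)),
       ((Real.sqrt 2)⁻¹ : ℝ) • (v.1 • (-om * Complex.exp (-om * p.1) * γ p.2)
          + v.2 • (Complex.exp (-om * p.1) * deriv γ p.2))) := by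
  simp [ThetaDeriv, Lcomp_apply]

/-- Let `γ : S¹ = ℝ/ℤ → ℂ` be a smooth embedded closed curve contained in an open
half-plane not containing `0`. Then `Θ(ϑ,t) = (1/√2)(e^{2πiϑ}γ(t), e^{-2πiϑ}γ(t))`
is a Lagrangian embedding of the torus into `(ℂ², ω₀)`: it is smooth, injective
modulo the `ℤ²`-periods, an immersion, and `ω₀` pulls back to zero. -/
theorem chekanov_torus_is_lagrangian_embedding (γ : ℝ → ℂ)
    (hsmooth : ContDiff ℝ (⊤ : ℕ∞) γ)
    (hper : ∀ t, γ (t + 1) = γ t)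
    (hinj : ∀ s t : ℝ, γ s = γ t → ∃ k : ℤ, s = t + k)
    (hreg : ∀ t, deriv γ t ≠ 0)
    (hhalf : ∃ (a : ℂ) (c : ℝ), a ≠ 0 ∧ 0 ≤ c ∧ ∀ t, ((starRingEnd ℂ) a * γ t).re > c) :
    ContDiff ℝ (⊤ : ℕ∞) (Theta γ) ∧
    (∀ p q : ℝ × ℝ, Theta γ p = Theta γ q →
      (∃ k : ℤ, p.1 = q.1 + k) ∧ (∃ m : ℤ, p.2 = q.2 + m)) ∧
    (∀ p : ℝ × ℝ, Function.Injective (fderiv ℝ (Theta γ) p)) ∧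
    (∀ p : ℝ × ℝ,
      omega0 (fderiv ℝ (Theta γ) p (1, 0)) (fderiv ℝ (Theta γ) p (0, 1)) = 0) := by
  have hγ : ∀ t, HasDerivAt γ (deriv γ t) t :=
    fun t => ((hsmooth.differentiable (by simp)) t).hasDerivAt
  have hc0 : ((Real.sqrt 2)⁻¹ : ℝ) ≠ 0 := by positivity
  have hγsum : ∀ s t, γ s + γ t ≠ 0 := by
    intro s t h
    obtain ⟨a, c, _, hc, ha⟩ := hhalf
    have h1 := ha s
    have h2 := ha t
    have : ((starRingEnd ℂ) a * γ s).re + ((starRingEnd ℂ) a * γ t).re = 0 := by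
      rw [← Complex.add_re, ← mul_add, h, mul_zero, Complex.zero_re]
    linarith
  have hγne : ∀ t, γ t ≠ 0 := by
    intro t h
    exact hγsum t t (by rw [h, add_zero])
  refine ⟨?_, ?_, ?_, ?_⟩
  · -- smoothness
    have hE : ∀ w : ℂ, ContDiff ℝ (⊤ : ℕ∞) (fun p : ℝ × ℝ => Complex.exp (w * p.1)) := by
      intro w
      have hexp : ContDiff ℝ (⊤ : ℕ∞) (Complex.exp : ℂ → ℂ) :=
        ContDiff.restrict_scalars ℝ (𝕜' := ℂ) Complex.contDiff_exp
      exact hexp.comp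
        (contDiff_const.mul (Complex.ofRealCLM.contDiff.comp contDiff_fst))
    have hg : ContDiff ℝ (⊤ : ℕ∞) (fun p : ℝ × ℝ => γ p.2) := hsmooth.comp contDiff_snd
    refine ContDiff.prodMk ?_ ?_
    · exact ((hE (2 * Real.pi * Complex.I)).mul hg).const_smul ((Real.sqrt 2)⁻¹ : ℝ)
    · have h := ((hE (-(2 * Real.pi * Complex.I))).mul hg).const_smul ((Real.sqrt 2)⁻¹ : ℝ)
      simpa only [neg_mul] using h
  · -- injectivity mod periods
    intro p q hpq
    rw [Theta, Theta, Prod.mk.injEq] at hpq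
    obtain ⟨h1, h2⟩ := hpq
    have h1' := smul_right_injective ℂ hc0 h1
    have h2' := smul_right_injective ℂ hc0 h2
    have e1 : ∀ x : ℝ, Complex.exp (2*Real.pi*Complex.I*(x:ℂ))
        * Complex.exp (-(2*Real.pi*Complex.I*(x:ℂ))) = 1 := by
      intro x; rw [← Complex.exp_add]; simp
    have hsq : γ p.2 * γ p.2 = γ q.2 * γ q.2 := by
      linear_combination Complex.exp (-(2*Real.pi*Complex.I*(p.1:ℂ))) * γ p.2 * h1'
        + Complex.exp (2*Real.pi*Complex.I*(q.1:ℂ)) * γ q.2 * h2'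
        + (γ q.2 * γ q.2) * e1 q.1 - (γ p.2 * γ p.2) * e1 p.1
    have hγeq : γ p.2 = γ q.2 := by
      have hfac : (γ p.2 - γ q.2) * (γ p.2 + γ q.2) = 0 := by linear_combination hsq
      rcases mul_eq_zero.1 hfac with h | h
      · exact sub_eq_zero.1 h
      · exact absurd h (hγsum p.2 q.2)
    refine ⟨?_, hinj p.2 q.2 hγeq⟩
    have hEeq : Complex.exp (2*Real.pi*Complex.I*(p.1:ℂ)) = Complex.exp (2*Real.pi*Complex.I*(q.1:ℂ)) := by
      rw [hγeq] at h1'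
      exact mul_right_cancel₀ (hγne q.2) h1'
    rw [Complex.exp_eq_exp_iff_exists_int] at hEeq
    obtain ⟨n, hn⟩ := hEeq
    refine ⟨n, ?_⟩
    have : (p.1 : ℂ) = (q.1 : ℂ) + n := by
      apply mul_left_cancel₀ om_ne
      rw [mul_add]
      calc om * p.1 = 2*Real.pi*Complex.I*(p.1:ℂ) := by rw [om]
        _ = 2*Real.pi*Complex.I*(q.1:ℂ) + n * (2*Real.pi*Complex.I) := hn
        _ = om * q.1 + om * n := by rw [om]; ring
    exact_mod_cast this
  · -- immersion
    intro p
    rw [theta_fderiv γ hγ p]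
    have key : ∀ v : ℝ × ℝ, ThetaDeriv γ p v = 0 → v = 0 := by
      intro v hv
      rw [LT_apply, Prod.mk.injEq] at hv
      obtain ⟨ha, hb⟩ := hv
      simp only [Prod.fst_zero, Prod.snd_zero] at ha hb
      rw [smul_eq_zero] at ha hb
      rcases ha with h | ha; · exact absurd h hc0
      rcases hb with h | hb; · exact absurd h hc0
      have hE1 : Complex.exp (om * p.1) ≠ 0 := Complex.exp_ne_zero _
      have hE2 : Complex.exp (-om * p.1) ≠ 0 := Complex.exp_ne_zero _
      rw [Complex.real_smul, Complex.real_smul] at ha hb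
      have ha' : (v.1:ℂ) * om * γ p.2 + (v.2:ℂ) * deriv γ p.2 = 0 := by
        apply mul_left_cancel₀ hE1
        rw [mul_zero, ← ha]; ring
      have hb' : -((v.1:ℂ) * om * γ p.2) + (v.2:ℂ) * deriv γ p.2 = 0 := by
        apply mul_left_cancel₀ hE2
        rw [mul_zero, ← hb]; ring
      have h1 : (v.1:ℂ) * om * γ p.2 = 0 := by linear_combination (ha' - hb') / 2
      have hv1 : (v.1:ℂ) = 0 := by
        rcases mul_eq_zero.1 h1 with h | h
        · rcases mul_eq_zero.1 h with h | h
          · exact h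
          · exact absurd h om_ne
        · exact absurd h (hγne p.2)
      have hv2 : (v.2:ℂ) = 0 := by
        have h2 : (v.2:ℂ) * deriv γ p.2 = 0 := by linear_combination ha' - h1
        rcases mul_eq_zero.1 h2 with h | h
        · exact h
        · exact absurd h (hreg p.2)
      have e1 : v.1 = 0 := by exact_mod_cast hv1
      have e2 : v.2 = 0 := by exact_mod_cast hv2
      exact Prod.ext e1 e2
    intro x y hxy
    have := key (x - y) (by rw [map_sub, hxy, sub_self])
    exact sub_eq_zero.1 this
  · -- Lagrangian
    intro p
    rw [theta_fderiv γ hγ p]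
    rw [LT_apply, LT_apply]
    simp only [omega0]
    set E1 := Complex.exp (om * p.1) with hE1
    set E2 := Complex.exp (-om * p.1) with hE2
    have hconjE1 : (starRingEnd ℂ) E1 = E2 := by
      rw [hE1, hE2, ← Complex.exp_conj, map_mul, conj_om, Complex.conj_ofReal, neg_mul]
    have hconjE2 : (starRingEnd ℂ) E2 = E1 := by
      rw [← hconjE1, Complex.conj_conj]
    rw [← Complex.add_im]
    have hz : ((starRingEnd ℂ) (((Real.sqrt 2)⁻¹:ℝ) • ((1:ℝ) • (om * E1 * γ p.2) + (0:ℝ) • (E1 * deriv γ p.2))) *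
        (((Real.sqrt 2)⁻¹:ℝ) • ((0:ℝ) • (om * E1 * γ p.2) + (1:ℝ) • (E1 * deriv γ p.2))) +
        (starRingEnd ℂ) (((Real.sqrt 2)⁻¹:ℝ) • ((1:ℝ) • (-om * E2 * γ p.2) + (0:ℝ) • (E2 * deriv γ p.2))) *
        (((Real.sqrt 2)⁻¹:ℝ) • ((0:ℝ) • (-om * E2 * γ p.2) + (1:ℝ) • (E2 * deriv γ p.2)))) = 0 := by
      simp only [one_smul, zero_smul, zero_add, add_zero, Complex.real_smul, map_mul,
        map_neg, neg_neg, hconjE1, hconjE2, conj_om, Complex.conj_ofReal]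
      ring
    rw [hz, Complex.zero_im]
end

section
/- For c ∈ (0,1), n ∈ ℤ, and any smooth map w_n: S^k → S^k, the map e_n: S^k × S¹ → ℝ^{k+1} × ℝ^{k+1}, e_n(x,t) = (x + c cos t · x, c sin t · w_n(x)), is a smooth embedding. -/
open scoped RealInnerProductSpace

/-- The map `e_n(x,t) = (x + c cos t · x, c sin t · w_n(x))` from `S^k × S¹` into
`ℝ^{k+1} × ℝ^{k+1}`, defined on all of `ℝ^{k+1} × ℝ`. -/
noncomputable def eMap (k : ℕ) (c : ℝ)
    (w : EuclideanSpace ℝ (Fin (k + 1)) → EuclideanSpace ℝ (Fin (k + 1)))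
    (p : EuclideanSpace ℝ (Fin (k + 1)) × ℝ) :
    EuclideanSpace ℝ (Fin (k + 1)) × EuclideanSpace ℝ (Fin (k + 1)) :=
  (p.1 + (c * Real.cos p.2) • p.1, (c * Real.sin p.2) • w p.1)

/-- For `c ∈ (0,1)`, `n ∈ ℤ` and any smooth map `w_n : S^k → S^k`, the map
`e_n : S^k × S¹ → ℝ^{k+1} × ℝ^{k+1}`, `e_n(x,t) = (x + c cos t · x, c sin t · w_n(x))`,
is a smooth embedding: it is smooth, injective on `S^k × ℝ` modulo the period
`2π` in `t`, and an immersion on the tangent spaces of `S^k × S¹`. -/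
theorem eMap_is_embedding (k : ℕ) (c : ℝ) (hc : c ∈ Set.Ioo (0 : ℝ) 1) (n : ℤ)
    (w : EuclideanSpace ℝ (Fin (k + 1)) → EuclideanSpace ℝ (Fin (k + 1)))
    (hw : ContDiff ℝ (⊤ : ℕ∞) w)
    (hws : ∀ x : EuclideanSpace ℝ (Fin (k + 1)), ‖x‖ = 1 → ‖w x‖ = 1) :
    ContDiff ℝ (⊤ : ℕ∞) (eMap k c w) ∧
    (∀ (x y : EuclideanSpace ℝ (Fin (k + 1))) (s t : ℝ), ‖x‖ = 1 → ‖y‖ = 1 →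
      eMap k c w (x, s) = eMap k c w (y, t) →
      x = y ∧ ∃ m : ℤ, s = t + 2 * Real.pi * m) ∧
    (∀ (x : EuclideanSpace ℝ (Fin (k + 1))) (t : ℝ), ‖x‖ = 1 →
      ∀ (u : EuclideanSpace ℝ (Fin (k + 1))) (s : ℝ), ⟪x, u⟫ = 0 →
        fderiv ℝ (eMap k c w) (x, t) (u, s) = 0 → u = 0 ∧ s = 0) := by
  obtain ⟨hc0, hc1⟩ := hc
  have hpos : ∀ r : ℝ, 0 < 1 + c * Real.cos r := fun r => by
    nlinarith [Real.neg_one_le_cos r, Real.cos_le_one r]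
  refine ⟨?_, ?_, ?_⟩
  · unfold eMap
    exact (contDiff_fst.add
        ((contDiff_const.mul (Real.contDiff_cos.comp contDiff_snd)).smul contDiff_fst)).prodMk
      ((contDiff_const.mul (Real.contDiff_sin.comp contDiff_snd)).smul (hw.comp contDiff_fst))
  · intro x y s t hx hy heq
    simp only [eMap, Prod.mk.injEq] at heq
    obtain ⟨h1, h2⟩ := heq
    have h1' : (1 + c * Real.cos s) • x = (1 + c * Real.cos t) • y := by
      rw [add_smul, add_smul, one_smul, one_smul]; exact h1
    have hab : 1 + c * Real.cos s = 1 + c * Real.cos t := by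
      have hn := congrArg norm h1'
      rw [norm_smul, norm_smul, hx, hy, Real.norm_eq_abs, Real.norm_eq_abs,
        abs_of_pos (hpos s), abs_of_pos (hpos t)] at hn
      simpa using hn
    have hxy : x = y := by
      rw [hab] at h1'
      exact smul_right_injective _ (hpos t).ne' h1'
    have hcos : Real.cos s = Real.cos t := by
      have : c * Real.cos s = c * Real.cos t := by linarith
      exact mul_left_cancel₀ hc0.ne' this
    have hwx : w x ≠ 0 := by
      intro h; have := hws x hx; rw [h, norm_zero] at this; norm_num at this
    have hsin : Real.sin s = Real.sin t := by
      rw [hxy] at h2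
      have : (c * Real.sin s - c * Real.sin t) • w y = 0 := by
        rw [sub_smul, h2, sub_self]
      rcases smul_eq_zero.1 this with h | h
      · have : c * Real.sin s = c * Real.sin t := by linarith [sub_eq_zero.1 h]
        exact mul_left_cancel₀ hc0.ne' this
      · rw [hxy] at hwx; exact absurd h hwx
    refine ⟨hxy, ?_⟩
    have hang : (s : Real.Angle) = (t : Real.Angle) := Real.Angle.cos_sin_inj hcos hsin
    obtain ⟨m, hm⟩ := Real.Angle.angle_eq_iff_two_pi_dvd_sub.1 hang
    exact ⟨m, by linarith⟩
  · intro x t hx u s hxu hder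
    have hwd : HasFDerivAt w (fderiv ℝ w x) x :=
      (hw.differentiable (by simp) x).hasFDerivAt
    have hfst : HasFDerivAt (fun p : EuclideanSpace ℝ (Fin (k + 1)) × ℝ => p.1)
        (ContinuousLinearMap.fst ℝ (EuclideanSpace ℝ (Fin (k + 1))) ℝ) (x, t) := hasFDerivAt_fst
    have hsnd : HasFDerivAt (fun p : EuclideanSpace ℝ (Fin (k + 1)) × ℝ => p.2)
        (ContinuousLinearMap.snd ℝ (EuclideanSpace ℝ (Fin (k + 1))) ℝ) (x, t) := hasFDerivAt_snd
    have hcosF : HasFDerivAt (fun p : EuclideanSpace ℝ (Fin (k + 1)) × ℝ => c * Real.cos p.2)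
        (c • (-(Real.sin t • ContinuousLinearMap.snd ℝ (EuclideanSpace ℝ (Fin (k + 1))) ℝ)))
        (x, t) := by
      have h1 := (Real.hasDerivAt_cos t).comp_hasFDerivAt (x, t) hsnd
      have h2 : HasFDerivAt (fun p : EuclideanSpace ℝ (Fin (k + 1)) × ℝ => Real.cos p.2)
          (-(Real.sin t • ContinuousLinearMap.snd ℝ (EuclideanSpace ℝ (Fin (k + 1))) ℝ))
          (x, t) := by
        simpa [Function.comp_def, neg_smul, ContinuousLinearMap.smulRight, deriv] using h1
      simpa using h2.const_mul c
    have hsinF : HasFDerivAt (fun p : EuclideanSpace ℝ (Fin (k + 1)) × ℝ => c * Real.sin p.2)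
        (c • (Real.cos t • ContinuousLinearMap.snd ℝ (EuclideanSpace ℝ (Fin (k + 1))) ℝ))
        (x, t) := by
      have h1 := (Real.hasDerivAt_sin t).comp_hasFDerivAt (x, t) hsnd
      have h2 : HasFDerivAt (fun p : EuclideanSpace ℝ (Fin (k + 1)) × ℝ => Real.sin p.2)
          (Real.cos t • ContinuousLinearMap.snd ℝ (EuclideanSpace ℝ (Fin (k + 1))) ℝ)
          (x, t) := by
        simpa [Function.comp_def, ContinuousLinearMap.smulRight, deriv] using h1
      simpa using h2.const_mul c
    have hwp : HasFDerivAt (fun p : EuclideanSpace ℝ (Fin (k + 1)) × ℝ => w p.1)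
        ((fderiv ℝ w x).comp (ContinuousLinearMap.fst ℝ (EuclideanSpace ℝ (Fin (k + 1))) ℝ))
        (x, t) := hwd.comp (x, t) hfst
    have hD : HasFDerivAt (eMap k c w)
        ((ContinuousLinearMap.fst ℝ (EuclideanSpace ℝ (Fin (k + 1))) ℝ +
          ((c * Real.cos t) • ContinuousLinearMap.fst ℝ (EuclideanSpace ℝ (Fin (k + 1))) ℝ +
            (c • (-(Real.sin t • ContinuousLinearMap.snd ℝ (EuclideanSpace ℝ (Fin (k + 1))) ℝ))).smulRight x)).prod
         ((c * Real.sin t) •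
            ((fderiv ℝ w x).comp (ContinuousLinearMap.fst ℝ (EuclideanSpace ℝ (Fin (k + 1))) ℝ)) +
          (c • (Real.cos t • ContinuousLinearMap.snd ℝ (EuclideanSpace ℝ (Fin (k + 1))) ℝ)).smulRight (w x))) (x, t) :=
      (hfst.add (hcosF.smul hfst)).prodMk (hsinF.smul hwp)
    rw [hD.fderiv] at hder
    simp only [ContinuousLinearMap.prod_apply, ContinuousLinearMap.add_apply,
      ContinuousLinearMap.smul_apply, ContinuousLinearMap.smulRight_apply,
      ContinuousLinearMap.coe_fst', ContinuousLinearMap.coe_snd', ContinuousLinearMap.neg_apply,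
      ContinuousLinearMap.comp_apply, Prod.mk_eq_zero, smul_eq_mul] at hder
    obtain ⟨heq1, heq2⟩ := hder
    have hinner : c * Real.sin t * s = 0 := by
      have h := congrArg (fun v => ⟪x, v⟫) heq1
      simp only [inner_add_right, inner_smul_right, hxu, real_inner_self_eq_norm_sq, hx,
        inner_zero_right, inner_neg_right] at h
      nlinarith [h]
    have hu : u = 0 := by
      have hz : (c * -(Real.sin t * s)) • x = (0 : EuclideanSpace ℝ (Fin (k + 1))) := by
        have : c * -(Real.sin t * s) = 0 := by nlinarith [hinner]
        rw [this, zero_smul]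
      have hu' : (1 + c * Real.cos t) • u = 0 := by
        rw [add_smul, one_smul]
        calc u + (c * Real.cos t) • u
            = u + ((c * Real.cos t) • u + (c * -(Real.sin t * s)) • x) := by
              rw [hz, add_zero]
          _ = 0 := heq1
      rcases smul_eq_zero.1 hu' with h | h
      · exact absurd h (hpos t).ne'
      · exact h
    have hwx : w x ≠ 0 := by
      intro h; have := hws x hx; rw [h, norm_zero] at this; norm_num at this
    have hcs : c * Real.cos t * s = 0 := by
      rw [hu] at heq2
      simp only [map_zero, smul_zero, zero_add] at heq2
      rcases smul_eq_zero.1 heq2 with h | h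
      · nlinarith [h]
      · exact absurd h hwx
    constructor
    · exact hu
    · by_contra hsne
      have h1 : Real.sin t = 0 := by
        rcases mul_eq_zero.1 hinner with h | h
        · rcases mul_eq_zero.1 h with h | h
          · exact absurd h hc0.ne'
          · exact h
        · exact absurd h hsne
      have h2 : Real.cos t = 0 := by
        rcases mul_eq_zero.1 hcs with h | h
        · rcases mul_eq_zero.1 h with h | h
          · exact absurd h hc0.ne'
          · exact h
        · exact absurd h hsne
      nlinarith [Real.sin_sq_add_cos_sq t]
end
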